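/- arXiv:2408.10587 — 4 statements merged into one kernel-verified Lean document; each statement's English description precedes it below -/
import Mathlib

section
/- Let E be a Banach space and let Ẽ : E → ℝ be a convex functional dominated by a sublinear functional Ê (i.e., Ẽ(X₁) − Ẽ(X₂) ≤ Ê(X₁ − X₂) for all X₁, X₂) with Ẽ(0) = 0. Then for every X ∈ E there exists a continuous linear functional L on E with L ≤ Ê pointwise such that Ẽ(X) = L(X) − α(L), where α(L) := sup_{Y ∈ E} (L(Y) − Ẽ(Y)); consequently Ẽ(X) = sup{ L(X) − α(L) : L linear continuous, L ≤ Ê }. -/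
/-!
The domination `Ẽ X₁ - Ẽ X₂ ≤ Ê (X₁ - X₂)` by the continuous `Ê` makes `Ẽ` continuous, so its
strict epigraph is an open convex set not containing `(X, Ẽ X)`. Separating the two by
Hahn–Banach yields a continuous subgradient `L` of `Ẽ` at `X`. Then `L Y ≤ Ẽ (X + Y) - Ẽ X ≤ Ê Y`,
and `Y ↦ L Y - Ẽ Y` is maximal at `X`, so `α L = L X - Ẽ X`. For every other `L`, `α L` is at
least `L X - Ẽ X` (Fenchel–Young), which gives the supremum formula.
-/

open Set Filter Topology

theorem continuous_of_sub_le_of_continuous {G : Type*} [TopologicalSpace G] [AddGroup G]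
    [IsTopologicalAddGroup G] {f p : G → ℝ} (hp : Continuous p) (hp_zero : p 0 = 0)
    (hf : ∀ x y, f x - f y ≤ p (x - y)) : Continuous f := by
  refine continuous_iff_continuousAt.2 fun y => ?_
  have lower : Tendsto (fun x => f y - p (y - x)) (𝓝 y) (𝓝 (f y)) := by
    simpa [hp_zero] using (by fun_prop : Continuous fun x => f y - p (y - x)).tendsto y
  have upper : Tendsto (fun x => f y + p (x - y)) (𝓝 y) (𝓝 (f y)) := by
    simpa [hp_zero] using (by fun_prop : Continuous fun x => f y + p (x - y)).tendsto y
  exact tendsto_of_tendsto_of_tendsto_of_le_of_le lower upper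
    (fun x => by linarith [hf y x]) (fun x => by linarith [hf x y])

section Subgradient

variable {E : Type*} [AddCommGroup E] [Module ℝ E] [TopologicalSpace E]
  [IsTopologicalAddGroup E] [ContinuousSMul ℝ E]

/-- The functional separating `(x, f x)` from the strict epigraph has a negative vertical
component; normalising it to `-1` leaves a subgradient. -/
theorem ConvexOn.exists_continuousLinearMap_le_sub {f : E → ℝ} (hf : ConvexOn ℝ univ f)
    (hf_cont : Continuous f) (x : E) : ∃ L : E →L[ℝ] ℝ, ∀ y, L (y - x) ≤ f y - f x := by
  set s : Set (E × ℝ) := {p | p.1 ∈ univ ∧ f p.1 < p.2}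
  have hs_open : IsOpen s := by
    simpa only [s, mem_univ, true_and] using
      isOpen_lt (by fun_prop : Continuous fun p : E × ℝ => f p.1) continuous_snd
  obtain ⟨φ, hφ⟩ := geometric_hahn_banach_open_point hf.convex_strict_epigraph hs_open
    (fun h => lt_irrefl _ h.2 : (x, f x) ∉ s)
  have hφ_apply : ∀ y β, φ (y, β) = φ (y, 0) + β * φ (0, 1) := fun y β => by
    rw [← smul_eq_mul, ← map_smul, ← map_add, Prod.smul_mk, smul_zero, smul_eq_mul, mul_one,
      Prod.mk_add_mk, add_zero, zero_add]
  set c := φ (0, 1)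
  have hc : c < 0 := by
    have := hφ (x, f x + 1) ⟨mem_univ _, lt_add_one _⟩
    rw [hφ_apply, hφ_apply x (f x)] at this
    linarith
  refine ⟨(-c)⁻¹ • φ.comp (.inl ℝ E ℝ), fun y => le_of_forall_pos_lt_add fun ε hε => ?_⟩
  have := hφ (y, f y + ε) ⟨mem_univ _, lt_add_of_pos_right _ hε⟩
  rw [hφ_apply, hφ_apply x (f x)] at this
  simp only [map_sub, smul_apply, ContinuousLinearMap.comp_apply,
    ContinuousLinearMap.inl_apply, smul_eq_mul]
  rw [← mul_sub, inv_mul_lt_iff₀ (neg_pos.2 hc)]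
  linarith

end Subgradient

section FenchelYoung

variable {ι : Type*} (f L : ι → ℝ)

theorem coe_sub_iSup_coe_sub_le (x : ι) :
    (L x : EReal) - ⨆ y, ((L y - f y : ℝ) : EReal) ≤ f x :=
  calc (L x : EReal) - ⨆ y, ((L y - f y : ℝ) : EReal)
      ≤ (L x : EReal) - ((L x - f x : ℝ) : EReal) :=
        EReal.sub_le_sub le_rfl (le_iSup (fun y => ((L y - f y : ℝ) : EReal)) x)
    _ = f x := by rw [← EReal.coe_sub, sub_sub_cancel]

theorem coe_sub_iSup_coe_sub_eq {x : ι} (hx : ∀ y, L y - f y ≤ L x - f x) :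
    (L x : EReal) - ⨆ y, ((L y - f y : ℝ) : EReal) = f x := by
  have hsup : ⨆ y, ((L y - f y : ℝ) : EReal) = ((L x - f x : ℝ) : EReal) :=
    le_antisymm (iSup_le fun y => EReal.coe_le_coe_iff.2 (hx y))
      (le_iSup (fun y => ((L y - f y : ℝ) : EReal)) x)
  rw [hsup, ← EReal.coe_sub, sub_sub_cancel]

end FenchelYoung

theorem convex_expectation_representation_general
    (E : Type*) [NormedAddCommGroup E] [NormedSpace ℝ E]
    (Ehat : E → ℝ) (Etil : E → ℝ)
    (hEhat_cont : Continuous Ehat)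
    (hEhat_hom : ∀ (c : ℝ), 0 ≤ c → ∀ x : E, Ehat (c • x) = c * Ehat x)
    (hconv : ConvexOn ℝ Set.univ Etil)
    (hdom : ∀ X₁ X₂ : E, Etil X₁ - Etil X₂ ≤ Ehat (X₁ - X₂))
    (α : (E →L[ℝ] ℝ) → EReal)
    (hα : ∀ L : E →L[ℝ] ℝ, α L = ⨆ Y : E, ((L Y - Etil Y : ℝ) : EReal))
    (X : E) :
    (∃ L : E →L[ℝ] ℝ, (∀ Y : E, L Y ≤ Ehat Y) ∧
      ((Etil X : ℝ) : EReal) = ((L X : ℝ) : EReal) - α L) ∧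
    ((Etil X : ℝ) : EReal) =
      ⨆ L : {L : E →L[ℝ] ℝ // ∀ Y : E, L Y ≤ Ehat Y},
        (((L : E →L[ℝ] ℝ) X : ℝ) : EReal) - α L := by
  have hEhat_zero : Ehat 0 = 0 := by simpa using hEhat_hom 0 le_rfl 0
  obtain ⟨L, hL⟩ := hconv.exists_continuousLinearMap_le_sub
    (continuous_of_sub_le_of_continuous hEhat_cont hEhat_zero hdom) X
  have hL_le : ∀ Y, L Y ≤ Ehat Y := fun Y => by
    simpa using (hL (X + Y)).trans (hdom (X + Y) X)
  have hrepr : (Etil X : EReal) = L X - α L := by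
    rw [hα, coe_sub_iSup_coe_sub_eq Etil L fun Y => by linarith [hL Y, map_sub L Y X]]
  refine ⟨⟨L, hL_le, hrepr⟩, le_antisymm ?_ (iSup_le fun L' => ?_)⟩
  · rw [hrepr]
    exact le_iSup (fun L' : {L : E →L[ℝ] ℝ // ∀ Y : E, L Y ≤ Ehat Y} =>
      (((L' : E →L[ℝ] ℝ) X : ℝ) : EReal) - α L') ⟨L, hL_le⟩
  · rw [hα]
    exact coe_sub_iSup_coe_sub_le Etil L' X

/-- Representation theorem for a convex functional dominated by a sublinear functional
on a Banach space: for every `X` there is a continuous linear functional `L ≤ Ê` with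
`Ẽ X = L X - α L`, where `α L = ⨆ Y, (L Y - Ẽ Y)` (valued in `EReal`); consequently
`Ẽ X` equals the supremum of `L X - α L` over all such `L`. -/
theorem convex_expectation_representation
    (E : Type*) [NormedAddCommGroup E] [NormedSpace ℝ E] [CompleteSpace E]
    (Ehat : E → ℝ) (Etil : E → ℝ)
    (hEhat_cont : Continuous Ehat)
    (hEhat_subadd : ∀ x y : E, Ehat (x + y) ≤ Ehat x + Ehat y)
    (hEhat_hom : ∀ (c : ℝ), 0 ≤ c → ∀ x : E, Ehat (c • x) = c * Ehat x)
    (hconv : ConvexOn ℝ Set.univ Etil)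
    (hzero : Etil 0 = 0)
    (hdom : ∀ X₁ X₂ : E, Etil X₁ - Etil X₂ ≤ Ehat (X₁ - X₂))
    (α : (E →L[ℝ] ℝ) → EReal)
    (hα : ∀ L : E →L[ℝ] ℝ, α L = ⨆ Y : E, ((L Y - Etil Y : ℝ) : EReal))
    (X : E) :
    (∃ L : E →L[ℝ] ℝ, (∀ Y : E, L Y ≤ Ehat Y) ∧
      ((Etil X : ℝ) : EReal) = ((L X : ℝ) : EReal) - α L) ∧
    ((Etil X : ℝ) : EReal) =
      ⨆ L : {L : E →L[ℝ] ℝ // ∀ Y : E, L Y ≤ Ehat Y},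
        (((L : E →L[ℝ] ℝ) X : ℝ) : EReal) - α L :=
  convex_expectation_representation_general E Ehat Etil hEhat_cont hEhat_hom hconv hdom α hα X
end

section
/- Let Ẽ be a convex functional on a Banach space E dominated by a sublinear functional Ê, with Ẽ(0)=0, and let X_n → X in E. Suppose L_n are continuous linear functionals with L_n ≤ Ê, L_n(X_n) − α(L_n) = Ẽ(X_n) for each n, and L_n converges pointwise to a continuous linear functional L with L ≤ Ê. Then L(X) − α(L) = Ẽ(X). -/
/-!
Since every `Lₙ` attains the supremum defining `α Lₙ` at `Xₙ`, we have `Lₙ Y - Ẽ Y ≤ Lₙ Xₙ - Ẽ Xₙ` for every `Y`. Domination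
by `Ê`, continuous and vanishing at `0`, gives `Lₙ Xₙ → L X` (because `Lₙ (Xₙ - X)` is trapped
between `-Ê (X - Xₙ)` and `Ê (Xₙ - X)`) and makes `Ẽ` continuous, so in the limit
`L Y - Ẽ Y ≤ L X - Ẽ X`: the supremum defining `α L` is attained at `X`.
-/

open Filter Set Topology

theorem EReal.coe_sub_eq_coe_iff {a c : ℝ} {b : EReal} : (a : EReal) - b = c ↔ b = (a - c : ℝ) := by
  induction b with
  | bot => simp [-EReal.coe_sub]
  | top => simp [-EReal.coe_sub]
  | coe b =>
    rw [← EReal.coe_sub, EReal.coe_eq_coe_iff, EReal.coe_eq_coe_iff]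
    constructor <;> intro h <;> linarith

section SupremumAttained

variable {ι : Type*} {f : ι → ℝ} {a c : ℝ}

theorem le_of_coe_sub_iSup_eq (h : (a : EReal) - ⨆ i, (f i : EReal) = c) (i : ι) :
    f i ≤ a - c :=
  EReal.coe_le_coe_iff.1 <| EReal.coe_sub_eq_coe_iff.1 h ▸ le_iSup (fun i ↦ (f i : EReal)) i

theorem coe_sub_iSup_eq_of_isGreatest (h : IsGreatest (range f) (a - c)) :
    (a : EReal) - ⨆ i, (f i : EReal) = c := by
  have hcoe : IsGreatest (range fun i ↦ (f i : EReal)) (a - c : ℝ) := by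
    rw [range_comp' ((↑) : ℝ → EReal) f]
    exact EReal.coe_strictMono.monotone.map_isGreatest h
  rw [EReal.coe_sub_eq_coe_iff, hcoe.isLUB.iSup_eq]

end SupremumAttained

section DominatedByContinuous

variable {E : Type*} [AddCommGroup E] [TopologicalSpace E] [IsTopologicalAddGroup E]
  {p : E → ℝ}

theorem continuous_of_sub_le (hp : ContinuousAt p 0) (hp0 : p 0 = 0) {f : E → ℝ}
    (hf : ∀ x y, f x - f y ≤ p (x - y)) : Continuous f := by
  refine continuous_iff_continuousAt.2 fun x ↦ ?_
  have hright : Tendsto (fun y ↦ y - x) (𝓝 x) (𝓝 0) := tendsto_sub_nhds_zero_iff.2 tendsto_id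
  have hleft : Tendsto (fun y ↦ x - y) (𝓝 x) (𝓝 0) := by simpa using hright.neg
  have hp' : Tendsto p (𝓝 0) (𝓝 0) := hp0 ▸ hp
  refine tendsto_of_tendsto_of_tendsto_of_le_of_le (g := fun y ↦ f x - p (x - y))
    (h := fun y ↦ f x + p (y - x)) ?_ ?_ (fun y ↦ ?_) (fun y ↦ ?_)
  · simpa using tendsto_const_nhds.sub (hp'.comp hleft)
  · simpa using tendsto_const_nhds.add (hp'.comp hright)
  · linarith [hf x y]
  · linarith [hf y x]

theorem tendsto_apply_apply_of_le (hp : ContinuousAt p 0) (hp0 : p 0 = 0)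
    {F : Type*} [FunLike F E ℝ] [AddMonoidHomClass F E ℝ] {ι : Type*} {l : Filter ι}
    {Λ : ι → F} (hΛ : ∀ i y, Λ i y ≤ p y) {u : ι → E} {x : E} (hu : Tendsto u l (𝓝 x))
    {r : ℝ} (hΛx : Tendsto (fun i ↦ Λ i x) l (𝓝 r)) :
    Tendsto (fun i ↦ Λ i (u i)) l (𝓝 r) := by
  have hright : Tendsto (fun i ↦ u i - x) l (𝓝 0) := tendsto_sub_nhds_zero_iff.2 hu
  have hleft : Tendsto (fun i ↦ x - u i) l (𝓝 0) := by simpa using hright.neg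
  have hp' : Tendsto p (𝓝 0) (𝓝 0) := hp0 ▸ hp
  have hgap : Tendsto (fun i ↦ Λ i (u i - x)) l (𝓝 0) := by
    refine tendsto_of_tendsto_of_tendsto_of_le_of_le (by simpa using (hp'.comp hleft).neg)
      (hp'.comp hright) (fun i ↦ ?_) (fun i ↦ hΛ i _)
    have := hΛ i (x - u i)
    simp only [map_sub] at this ⊢
    linarith
  simpa using hgap.add hΛx

end DominatedByContinuous

theorem maximizer_limit_attains_general
    (E : Type*) [NormedAddCommGroup E] [NormedSpace ℝ E]
    (Ehat : E → ℝ) (Etil : E → ℝ)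
    (hEhat_cont : Continuous Ehat)
    (hEhat_hom : ∀ (c : ℝ), 0 ≤ c → ∀ x : E, Ehat (c • x) = c * Ehat x)
    (hdom : ∀ X₁ X₂ : E, Etil X₁ - Etil X₂ ≤ Ehat (X₁ - X₂))
    (α : (E →L[ℝ] ℝ) → EReal)
    (hα : ∀ L : E →L[ℝ] ℝ, α L = ⨆ Y : E, ((L Y - Etil Y : ℝ) : EReal))
    (Xn : ℕ → E) (X : E) (hX : Tendsto Xn atTop (nhds X))
    (Ln : ℕ → E →L[ℝ] ℝ) (L : E →L[ℝ] ℝ)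
    (hLn_dom : ∀ n, ∀ Y : E, Ln n Y ≤ Ehat Y)
    (hLn_attain : ∀ n, ((Ln n (Xn n) : ℝ) : EReal) - α (Ln n) = ((Etil (Xn n) : ℝ) : EReal))
    (hptwise : ∀ Y : E, Tendsto (fun n => Ln n Y) atTop (nhds (L Y))) :
    ((L X : ℝ) : EReal) - α L = ((Etil X : ℝ) : EReal) := by
  have hEhat0 : Ehat 0 = 0 := by simpa using hEhat_hom 0 le_rfl 0
  have hEtil : Continuous Etil := continuous_of_sub_le hEhat_cont.continuousAt hEhat0 hdom
  have hLnXn : Tendsto (fun n ↦ Ln n (Xn n)) atTop (𝓝 (L X)) :=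
    tendsto_apply_apply_of_le hEhat_cont.continuousAt hEhat0 hLn_dom hX (hptwise X)
  have hmax : ∀ Y, L Y - Etil Y ≤ L X - Etil X := fun Y ↦
    le_of_tendsto_of_tendsto' ((hptwise Y).sub_const _) (hLnXn.sub ((hEtil.tendsto X).comp hX))
      fun n ↦ le_of_coe_sub_iSup_eq (hα (Ln n) ▸ hLn_attain n) Y
  rw [hα]
  exact coe_sub_iSup_eq_of_isGreatest ⟨⟨X, rfl⟩, forall_mem_range.2 hmax⟩

/-- Stability of maximizers: if `Xₙ → X`, `Lₙ ≤ Ê` attains `Ẽ Xₙ = Lₙ Xₙ - α Lₙ`, and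
`Lₙ → L` pointwise with `L ≤ Ê`, then `L` attains the representation for `X`:
`L X - α L = Ẽ X`. -/
theorem maximizer_limit_attains
    (E : Type*) [NormedAddCommGroup E] [NormedSpace ℝ E] [CompleteSpace E]
    (Ehat : E → ℝ) (Etil : E → ℝ)
    (hEhat_cont : Continuous Ehat)
    (hEhat_subadd : ∀ x y : E, Ehat (x + y) ≤ Ehat x + Ehat y)
    (hEhat_hom : ∀ (c : ℝ), 0 ≤ c → ∀ x : E, Ehat (c • x) = c * Ehat x)
    (hconv : ConvexOn ℝ Set.univ Etil)
    (hzero : Etil 0 = 0)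
    (hdom : ∀ X₁ X₂ : E, Etil X₁ - Etil X₂ ≤ Ehat (X₁ - X₂))
    (α : (E →L[ℝ] ℝ) → EReal)
    (hα : ∀ L : E →L[ℝ] ℝ, α L = ⨆ Y : E, ((L Y - Etil Y : ℝ) : EReal))
    (Xn : ℕ → E) (X : E) (hX : Tendsto Xn atTop (nhds X))
    (Ln : ℕ → E →L[ℝ] ℝ) (L : E →L[ℝ] ℝ)
    (hLn_dom : ∀ n, ∀ Y : E, Ln n Y ≤ Ehat Y)
    (hLn_attain : ∀ n, ((Ln n (Xn n) : ℝ) : EReal) - α (Ln n) = ((Etil (Xn n) : ℝ) : EReal))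
    (hL_dom : ∀ Y : E, L Y ≤ Ehat Y)
    (hptwise : ∀ Y : E, Tendsto (fun n => Ln n Y) atTop (nhds (L Y))) :
    ((L X : ℝ) : EReal) - α L = ((Etil X : ℝ) : EReal) :=
  maximizer_limit_attains_general E Ehat Etil hEhat_cont hEhat_hom hdom α hα Xn X hX Ln L hLn_dom
    hLn_attain hptwise
end

section
/- Let 𝒫 be a weakly compact convex set of probability measures on a measurable space, let Ẽ be a convex expectation on L¹_G(Ω_T) represented as Ẽ[X] = sup_{P ∈ 𝒫}(E_P[X] − α₀ᵀ(P)) with α₀ᵀ(P) = sup_Y (E_P[Y] − Ẽ[Y]). If X_n → X in the norm ‖·‖ = sup_{P∈𝒫} E_P[|·|], P_n ∈ 𝒫 attains the supremum for X_n, and P_n converges weakly to P ∈ 𝒫, then E_{P_n}[X_n] → E_P[X] and P attains the supremum for X, i.e., E_P[X] − α₀ᵀ(P) = Ẽ[X]. -/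
open Filter MeasureTheory

/-- Stability of maximizing measures for a convex expectation represented over a
weakly compact convex set `Pc` of probability measures: if `Xₙ → X` uniformly in
`L¹(P)` over `P ∈ Pc`, `Pₙ ∈ Pc` attains the supremum for `Xₙ`, and `Pₙ → P ∈ Pc`
weakly (integrals of elements of `L¹_G` converge), then `E_{Pₙ}[Xₙ] → E_P[X]` and
`P` attains the supremum for `X`. -/
theorem maximizing_measure_stability
    (Ω : Type*) [MeasurableSpace Ω]
    (Pc : Set (Measure Ω)) (hprob : ∀ Q ∈ Pc, IsProbabilityMeasure Q)
    (D : Set (Ω → ℝ)) (Etil : (Ω → ℝ) → ℝ)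
    (hint : ∀ Z ∈ D, ∀ Q ∈ Pc, Integrable Z Q)
    (α : Measure Ω → EReal)
    (hα : ∀ Q : Measure Ω, α Q = ⨆ Y : D, ((∫ ω, (Y : Ω → ℝ) ω ∂Q - Etil Y : ℝ) : EReal))
    (hrep : ∀ Z ∈ D, ((Etil Z : ℝ) : EReal) =
      ⨆ Q : Pc, ((∫ ω, Z ω ∂(Q : Measure Ω) : ℝ) : EReal) - α Q)
    (Xn : ℕ → Ω → ℝ) (X : Ω → ℝ) (hXnD : ∀ n, Xn n ∈ D) (hXD : X ∈ D)
    (hnorm : ∀ ε > (0 : ℝ), ∃ N : ℕ, ∀ n ≥ N, ∀ Q ∈ Pc, ∫ ω, |Xn n ω - X ω| ∂Q ≤ ε)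
    (Pn : ℕ → Measure Ω) (P : Measure Ω) (hPn : ∀ n, Pn n ∈ Pc) (hP : P ∈ Pc)
    (hattain : ∀ n, ((∫ ω, Xn n ω ∂(Pn n) : ℝ) : EReal) - α (Pn n)
      = ((Etil (Xn n) : ℝ) : EReal))
    (hweak : ∀ Z ∈ D, Tendsto (fun n => ∫ ω, Z ω ∂(Pn n)) atTop (nhds (∫ ω, Z ω ∂P))) :
    Tendsto (fun n => ∫ ω, Xn n ω ∂(Pn n)) atTop (nhds (∫ ω, X ω ∂P)) ∧
    ((∫ ω, X ω ∂P : ℝ) : EReal) - α P = ((Etil X : ℝ) : EReal) := by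
  have hiXn : ∀ n, ∀ Q ∈ Pc, Integrable (Xn n) Q := fun n => hint _ (hXnD n)
  have hiX : ∀ Q ∈ Pc, Integrable X Q := hint _ hXD
  -- |∫ Xn dQ - ∫ X dQ| ≤ ∫ |Xn - X| dQ
  have habs : ∀ n, ∀ Q ∈ Pc,
      |∫ ω, Xn n ω ∂Q - ∫ ω, X ω ∂Q| ≤ ∫ ω, |Xn n ω - X ω| ∂Q := by
    intro n Q hQ
    rw [← integral_sub (hiXn n Q hQ) (hiX Q hQ)]
    simpa [Real.norm_eq_abs] using
      norm_integral_le_integral_norm (fun ω => Xn n ω - X ω) (μ := Q)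
  -- each term is below the sup defining α
  have hterm : ∀ Q : Measure Ω, ∀ Y, Y ∈ D →
      ((∫ ω, Y ω ∂Q - Etil Y : ℝ) : EReal) ≤ α Q := by
    intro Q Y hY
    rw [hα Q]
    exact le_iSup (fun Y : D => ((∫ ω, (Y : Ω → ℝ) ω ∂Q - Etil Y : ℝ) : EReal)) ⟨Y, hY⟩
  have hbot : ∀ Q : Measure Ω, α Q ≠ ⊥ :=
    fun Q => ((EReal.bot_lt_coe _).trans_le (hterm Q X hXD)).ne'
  have hle : ∀ Q, Q ∈ Pc → ∀ Z, Z ∈ D →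
      ((∫ ω, Z ω ∂Q : ℝ) : EReal) - α Q ≤ ((Etil Z : ℝ) : EReal) := by
    intro Q hQ Z hZ
    rw [hrep Z hZ]
    exact le_iSup (fun Q : Pc =>
      ((∫ ω, Z ω ∂(Q : Measure Ω) : ℝ) : EReal) - α Q) ⟨Q, hQ⟩
  -- continuity of Etil under the uniform integral bound
  have key : ∀ Z, Z ∈ D → ∀ W, W ∈ D → ∀ ε : ℝ,
      (∀ Q ∈ Pc, ∫ ω, Z ω ∂Q ≤ ∫ ω, W ω ∂Q + ε) → Etil Z ≤ Etil W + ε := by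
    intro Z hZ W hW ε h
    have h1 : ((Etil Z : ℝ) : EReal) ≤ ((Etil W + ε : ℝ) : EReal) := by
      rw [hrep Z hZ]
      apply iSup_le
      rintro ⟨Q, hQ⟩
      by_cases htop : α Q = ⊤
      · simp [htop, EReal.sub_top]
      · have h2 := hle Q hQ W hW
        rw [← EReal.coe_toReal htop (hbot Q), ← EReal.coe_sub,
          EReal.coe_le_coe_iff] at h2 ⊢
        have h3 := h Q hQ
        linarith
    exact_mod_cast h1
  have hEtilN : ∀ ε : ℝ, 0 < ε → ∃ N, ∀ n ≥ N, |Etil (Xn n) - Etil X| ≤ ε := by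
    intro ε hε
    obtain ⟨N, hN⟩ := hnorm ε hε
    refine ⟨N, fun n hn => ?_⟩
    have h1 : ∀ Q ∈ Pc, ∫ ω, Xn n ω ∂Q ≤ ∫ ω, X ω ∂Q + ε := by
      intro Q hQ
      have := habs n Q hQ
      have := hN n hn Q hQ
      have := abs_le.mp (le_trans (habs n Q hQ) (hN n hn Q hQ))
      linarith [this.2]
    have h2 : ∀ Q ∈ Pc, ∫ ω, X ω ∂Q ≤ ∫ ω, Xn n ω ∂Q + ε := by
      intro Q hQ
      have := abs_le.mp (le_trans (habs n Q hQ) (hN n hn Q hQ))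
      linarith [this.1]
    have k1 := key _ (hXnD n) _ hXD ε h1
    have k2 := key _ hXD _ (hXnD n) ε h2
    rw [abs_le]
    constructor <;> linarith
  have hEtilT : Tendsto (fun n => Etil (Xn n)) atTop (nhds (Etil X)) := by
    rw [Metric.tendsto_atTop]
    intro ε hε
    obtain ⟨N, hN⟩ := hEtilN (ε / 2) (by linarith)
    refine ⟨N, fun n hn => ?_⟩
    have := hN n hn
    rw [Real.dist_eq]
    linarith
  -- Part 1
  have part1 : Tendsto (fun n => ∫ ω, Xn n ω ∂(Pn n)) atTop (nhds (∫ ω, X ω ∂P)) := by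
    rw [Metric.tendsto_atTop]
    intro ε hε
    obtain ⟨N1, hN1⟩ := hnorm (ε / 2) (by linarith)
    obtain ⟨N2, hN2⟩ := Metric.tendsto_atTop.mp (hweak X hXD) (ε / 2) (by linarith)
    refine ⟨max N1 N2, fun n hn => ?_⟩
    have h1 := le_trans (habs n (Pn n) (hPn n))
      (hN1 n (le_trans (le_max_left _ _) hn) (Pn n) (hPn n))
    have h3 := hN2 n (le_trans (le_max_right _ _) hn)
    rw [Real.dist_eq] at h3 ⊢
    have h4 := abs_sub_le (∫ ω, Xn n ω ∂(Pn n)) (∫ ω, X ω ∂(Pn n)) (∫ ω, X ω ∂P)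
    linarith
  -- α (Pn n) is finite with explicit value
  have hc : ∀ n, α (Pn n) = ((∫ ω, Xn n ω ∂(Pn n) - Etil (Xn n) : ℝ) : EReal) := by
    intro n
    have h := hattain n
    by_cases htop : α (Pn n) = ⊤
    · rw [htop, EReal.sub_top] at h
      exact absurd h.symm (EReal.coe_ne_bot _)
    · rw [← EReal.coe_toReal htop (hbot _), ← EReal.coe_sub,
        EReal.coe_eq_coe_iff] at h
      rw [← EReal.coe_toReal htop (hbot _), EReal.coe_eq_coe_iff]
      linarith
  have hrn : Tendsto (fun n => ∫ ω, Xn n ω ∂(Pn n) - Etil (Xn n)) atTop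
      (nhds (∫ ω, X ω ∂P - Etil X)) := part1.sub hEtilT
  have hαP : α P = ((∫ ω, X ω ∂P - Etil X : ℝ) : EReal) := by
    apply le_antisymm
    · rw [hα P]
      apply iSup_le
      rintro ⟨Y, hY⟩
      rw [EReal.coe_le_coe_iff]
      refine le_of_tendsto_of_tendsto' ((hweak Y hY).sub tendsto_const_nhds) hrn
        (fun n => ?_)
      have h := hterm (Pn n) Y hY
      rw [hc n, EReal.coe_le_coe_iff] at h
      exact h
    · exact hterm P X hXD
  refine ⟨part1, ?_⟩
  rw [hαP, ← EReal.coe_sub, EReal.coe_eq_coe_iff]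
  ring
end

section
/- (Minimax extraction of a single reference measure) Let 𝒫* be a nonempty convex weakly compact set of probability measures, and let {L^u : u ∈ 𝒰} be a family of random variables in L¹_G such that P ↦ E_P[L^u] is affine and weakly continuous for each u, u ↦ L^u is affine in u with 𝒰 convex, and sup_{P ∈ 𝒫*} E_P[L^u] ≥ 0 for all u ∈ 𝒰. Then there exists P* ∈ 𝒫* with inf_{u ∈ 𝒰} E_{P*}[L^u] ≥ 0. -/
open MeasureTheory
open scoped NNReal

lemma minimax_combo_aux {V : Type*} [AddCommGroup V] [Module ℝ V] {𝒰 : Set V}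
    (h𝒰 : Convex ℝ 𝒰) {Ω : Type*} (L : V → Ω → ℝ)
    (haffine : ∀ u₁ ∈ 𝒰, ∀ u₂ ∈ 𝒰, ∀ lam : ℝ, lam ∈ Set.Icc (0 : ℝ) 1 →
      L (lam • u₁ + (1 - lam) • u₂) = fun ω => lam * L u₁ ω + (1 - lam) * L u₂ ω)
    {ι : Type*} (S : Finset ι) (u : ι → V) (w : ι → ℝ)
    (hu : ∀ i ∈ S, u i ∈ 𝒰) (hw : ∀ i ∈ S, 0 ≤ w i) (hw1 : ∑ i ∈ S, w i = 1) :
    (∑ i ∈ S, w i • u i) ∈ 𝒰 ∧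
      L (∑ i ∈ S, w i • u i) = fun ω => ∑ i ∈ S, w i * L (u i) ω := by
  classical
  induction S using Finset.cons_induction generalizing w with
  | empty => simp at hw1
  | cons a s ha IH =>
    simp only [Finset.sum_cons] at hw1 ⊢
    have hwa0 : 0 ≤ w a := hw a (Finset.mem_cons_self a s)
    have hua : u a ∈ 𝒰 := hu a (Finset.mem_cons_self a s)
    have ht0 : 0 ≤ ∑ i ∈ s, w i :=
      Finset.sum_nonneg fun i hi => hw i (Finset.mem_cons_of_mem hi)
    rcases eq_or_lt_of_le ht0 with h0 | hpos
    · have hz : ∀ i ∈ s, w i = 0 :=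
        (Finset.sum_eq_zero_iff_of_nonneg
          (fun i hi => hw i (Finset.mem_cons_of_mem hi))).1 h0.symm
      have hwa : w a = 1 := by rw [← h0] at hw1; linarith
      have hsum : w a • u a + ∑ i ∈ s, w i • u i = u a := by
        rw [Finset.sum_eq_zero (fun i hi => by rw [hz i hi, zero_smul]), hwa, one_smul,
          add_zero]
      refine ⟨by rw [hsum]; exact hua, ?_⟩
      rw [hsum]
      funext ω
      rw [Finset.sum_eq_zero (fun i hi => by rw [hz i hi, zero_mul]), hwa, one_mul, add_zero]
    · set t := ∑ i ∈ s, w i with ht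
      have htne : t ≠ 0 := ne_of_gt hpos
      have ht1 : 1 - w a = t := by linarith
      have hIH := IH (fun i => w i / t)
        (fun i hi => hu i (Finset.mem_cons_of_mem hi))
        (fun i hi => div_nonneg (hw i (Finset.mem_cons_of_mem hi)) (le_of_lt hpos))
        (by rw [← Finset.sum_div, ← ht, div_self htne])
      obtain ⟨hymem, hyL⟩ := hIH
      set y := ∑ i ∈ s, (w i / t) • u i with hy
      have hsum : ∑ i ∈ s, w i • u i = t • y := by
        rw [hy, Finset.smul_sum]
        refine Finset.sum_congr rfl fun i hi => ?_
        rw [smul_smul, mul_comm, div_mul_cancel₀ _ htne]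
      have hwa01 : w a ∈ Set.Icc (0 : ℝ) 1 := ⟨hwa0, by linarith⟩
      have hL := haffine (u a) hua y hymem (w a) hwa01
      rw [ht1] at hL
      constructor
      · rw [hsum]
        exact h𝒰 hua hymem hwa0 (le_of_lt hpos) (by linarith)
      · rw [hsum, hL]
        funext ω
        have := congrFun hyL ω
        rw [this, Finset.mul_sum]
        congr 1
        refine Finset.sum_congr rfl fun i hi => ?_
        rw [← mul_assoc, mul_comm t, div_mul_cancel₀ _ htne]

/-- Minimax extraction of a single reference measure: if `𝒫*` is a nonempty convex
weakly compact set of probability measures, `u ↦ L^u` is affine on a convex control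
set `𝒰`, `P ↦ E_P[L^u]` is continuous on `𝒫*`, and `sup_{P ∈ 𝒫*} E_P[L^u] ≥ 0` for
every `u ∈ 𝒰`, then some `P* ∈ 𝒫*` satisfies `E_{P*}[L^u] ≥ 0` for all `u ∈ 𝒰`. -/
theorem minimax_reference_measure
    (Ω : Type*) [MeasurableSpace Ω] [TopologicalSpace Ω] [OpensMeasurableSpace Ω]
    (Pstar : Set (ProbabilityMeasure Ω))
    (hne : Pstar.Nonempty) (hcpt : IsCompact Pstar)
    (hconvP : ∀ P ∈ Pstar, ∀ Q ∈ Pstar, ∀ a b : ℝ≥0, a + b = 1 →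
      ∃ R ∈ Pstar, (R : Measure Ω) = a • (P : Measure Ω) + b • (Q : Measure Ω))
    (V : Type*) [AddCommGroup V] [Module ℝ V]
    (𝒰 : Set V) (h𝒰 : Convex ℝ 𝒰)
    (L : V → Ω → ℝ)
    (hint : ∀ u ∈ 𝒰, ∀ P ∈ Pstar, Integrable (L u) (P : Measure Ω))
    (haffine : ∀ u₁ ∈ 𝒰, ∀ u₂ ∈ 𝒰, ∀ lam : ℝ, lam ∈ Set.Icc (0 : ℝ) 1 →
      L (lam • u₁ + (1 - lam) • u₂) = fun ω => lam * L u₁ ω + (1 - lam) * L u₂ ω)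
    (hcont : ∀ u ∈ 𝒰, ContinuousOn
      (fun P : ProbabilityMeasure Ω => ∫ ω, L u ω ∂(P : Measure Ω)) Pstar)
    (hsup : ∀ u ∈ 𝒰, 0 ≤ sSup {r : ℝ | ∃ P ∈ Pstar, r = ∫ ω, L u ω ∂(P : Measure Ω)}) :
    ∃ Pref ∈ Pstar, ∀ u ∈ 𝒰, 0 ≤ ∫ ω, L u ω ∂(Pref : Measure Ω) := by
  classical
  obtain ⟨P₀, hP₀⟩ := hne
  -- Step 1: finite intersection property via Hahn-Banach separation
  have key : ∀ T : Finset V, ↑T ⊆ 𝒰 →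
      ∃ P ∈ Pstar, ∀ u ∈ T, 0 ≤ ∫ ω, L u ω ∂(P : Measure Ω) := by
    intro T hT
    by_contra hcon
    push_neg at hcon
    set ι := {x // x ∈ T}
    set Φ : ProbabilityMeasure Ω → (ι → ℝ) :=
      fun P i => ∫ ω, L i.val ω ∂(P : Measure Ω) with hΦ
    set C : Set (ι → ℝ) := Φ '' Pstar with hC
    set Q : Set (ι → ℝ) := {x | ∀ i, 0 ≤ x i} with hQ
    have hmemU : ∀ i : ι, (i : V) ∈ 𝒰 := fun i => hT i.2
    have hCcpt : IsCompact C :=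
      hcpt.image_of_continuousOn (continuousOn_pi.2 fun i => hcont _ (hmemU i))
    have hCconv : Convex ℝ C := by
      rintro x ⟨P, hP, rfl⟩ y ⟨P', hP', rfl⟩ a b ha hb hab
      obtain ⟨R, hR, hReq⟩ := hconvP P hP P' hP' a.toNNReal b.toNNReal (by
        rw [Real.toNNReal_add_toNNReal ha hb, hab, Real.toNNReal_one])
      refine ⟨R, hR, ?_⟩
      funext i
      have hi1 : Integrable (L i.val) ((a.toNNReal : ENNReal) • (P : Measure Ω)) :=
        (hint _ (hmemU i) P hP).smul_measure ENNReal.coe_ne_top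
      have hi2 : Integrable (L i.val) ((b.toNNReal : ENNReal) • (P' : Measure Ω)) :=
        (hint _ (hmemU i) P' hP').smul_measure ENNReal.coe_ne_top
      show Φ R i = a • Φ P i + b • Φ P' i
      have hReq' : (R : Measure Ω) = (a.toNNReal : ENNReal) • (P : Measure Ω)
          + (b.toNNReal : ENNReal) • (P' : Measure Ω) := hReq
      simp only [hΦ, hReq', smul_eq_mul]
      rw [integral_add_measure hi1 hi2, integral_smul_measure, integral_smul_measure]
      simp [Real.coe_toNNReal a ha, Real.coe_toNNReal b hb]
    have hQclosed : IsClosed Q := by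
      have : Q = ⋂ i, {x : ι → ℝ | 0 ≤ x i} := by
        ext x; simp [hQ, Set.mem_iInter]
      rw [this]
      exact isClosed_iInter fun i => isClosed_le continuous_const (continuous_apply i)
    have hQconv : Convex ℝ Q := by
      intro x hx y hy a b ha hb hab i
      simp only [Pi.add_apply, Pi.smul_apply, smul_eq_mul]
      exact add_nonneg (mul_nonneg ha (hx i)) (mul_nonneg hb (hy i))
    have hdisj : Disjoint C Q := by
      rw [Set.disjoint_left]
      rintro x ⟨P, hP, rfl⟩ hxQ
      obtain ⟨u, huT, hlt⟩ := hcon P hP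
      exact absurd (hxQ ⟨u, huT⟩) (not_le.mpr hlt)
    obtain ⟨f, u0, v0, hfC, huv, hfQ⟩ :=
      geometric_hahn_banach_compact_closed hCconv hCcpt hQconv hQclosed hdisj
    have hv0 : v0 < 0 := by
      have := hfQ 0 (fun i => le_refl 0)
      simpa using this
    set lam : ι → ℝ := fun i => f (fun j => if i = j then 1 else 0) with hlam
    have hf_eq : ∀ x : ι → ℝ, f x = ∑ i, x i * lam i := by
      intro x
      conv_lhs => rw [pi_eq_sum_univ x]
      rw [map_sum]
      exact Finset.sum_congr rfl fun i _ => by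
        rw [ContinuousLinearMap.map_smul, smul_eq_mul]
    have hlam0 : ∀ i, 0 ≤ lam i := by
      intro i
      by_contra hneg
      push_neg at hneg
      have hc : 0 ≤ v0 / lam i :=
        div_nonneg_iff.mpr (Or.inr ⟨le_of_lt hv0, le_of_lt hneg⟩)
      have hmem : (v0 / lam i) • (fun j => if i = j then (1 : ℝ) else 0) ∈ Q := by
        intro j
        simp only [Pi.smul_apply, smul_eq_mul]
        by_cases h : i = j
        · rw [if_pos h, mul_one]; exact h ▸ hc
        · rw [if_neg h, mul_zero]
      have hcontr := hfQ _ hmem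
      have hfi : f (fun j => if i = j then (1 : ℝ) else 0) = lam i := rfl
      rw [ContinuousLinearMap.map_smul, smul_eq_mul, hfi,
        div_mul_cancel₀ _ (ne_of_lt hneg)] at hcontr
      exact lt_irrefl _ hcontr
    set s := ∑ i, lam i with hs
    have hs0 : 0 ≤ s := Finset.sum_nonneg fun i _ => hlam0 i
    have hfP₀ : f (Φ P₀) < u0 := hfC _ ⟨P₀, hP₀, rfl⟩
    have hu0 : u0 < 0 := lt_trans huv hv0
    have hsne : s ≠ 0 := by
      intro h
      have hz : ∀ i ∈ Finset.univ, lam i = 0 :=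
        (Finset.sum_eq_zero_iff_of_nonneg (fun i _ => hlam0 i)).1 h
      rw [hf_eq] at hfP₀
      rw [Finset.sum_eq_zero (fun i hi => by rw [hz i hi, mul_zero])] at hfP₀
      linarith
    have hspos : 0 < s := lt_of_le_of_ne hs0 (Ne.symm hsne)
    set w : ι → ℝ := fun i => lam i / s with hw
    obtain ⟨hustar_mem, hustarL⟩ := minimax_combo_aux h𝒰 L haffine Finset.univ
      (fun i : ι => (i : V)) w (fun i _ => hmemU i)
      (fun i _ => div_nonneg (hlam0 i) hs0)
      (by rw [← Finset.sum_div, ← hs, div_self hsne])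
    set ustar := ∑ i : ι, w i • (i : V) with hustar
    have hbound : ∀ P ∈ Pstar, ∫ ω, L ustar ω ∂(P : Measure Ω) ≤ u0 / s := by
      intro P hP
      have hint' : ∀ i : ι, Integrable (fun ω => w i * L i.val ω) (P : Measure Ω) :=
        fun i => (hint _ (hmemU i) P hP).const_mul _
      have heq : ∫ ω, L ustar ω ∂(P : Measure Ω)
          = ∑ i, w i * ∫ ω, L i.val ω ∂(P : Measure Ω) := by
        rw [hustarL, integral_finset_sum Finset.univ (fun i _ => hint' i)]
        exact Finset.sum_congr rfl fun i _ => integral_const_mul _ _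
      have hfP : ∑ i, (Φ P i) * lam i < u0 := by
        rw [← hf_eq]; exact hfC _ ⟨P, hP, rfl⟩
      have heq2 : ∑ i, w i * ∫ ω, L i.val ω ∂(P : Measure Ω)
          = (∑ i, (Φ P i) * lam i) / s := by
        rw [Finset.sum_div]
        exact Finset.sum_congr rfl fun i _ => by
          simp only [hw, hΦ]; ring
      rw [heq, heq2, div_eq_mul_inv, div_eq_mul_inv]
      exact mul_le_mul_of_nonneg_right hfP.le (inv_nonneg.2 hs0)
    have hSne : {r : ℝ | ∃ P ∈ Pstar, r = ∫ ω, L ustar ω ∂(P : Measure Ω)}.Nonempty :=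
      ⟨_, P₀, hP₀, rfl⟩
    have hle := csSup_le hSne (by rintro r ⟨P, hP, rfl⟩; exact hbound P hP)
    have hsup' := hsup ustar hustar_mem
    have hneg : u0 / s < 0 := div_neg_of_neg_of_pos hu0 hspos
    linarith
  -- Step 2: compactness
  haveI : Nonempty ↥Pstar := Set.Nonempty.to_subtype ⟨P₀, hP₀⟩
  haveI : CompactSpace ↥Pstar := isCompact_iff_compactSpace.mp hcpt
  set A : ↥𝒰 → Set ↥Pstar :=
    fun u => {p | 0 ≤ ∫ ω, L u.val ω ∂((p : ProbabilityMeasure Ω) : Measure Ω)} with hA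
  have hAclosed : ∀ u, IsClosed (A u) := fun u =>
    isClosed_le continuous_const ((hcont u.val u.2).restrict)
  have hinter : (Set.univ ∩ ⋂ u, A u).Nonempty := by
    by_contra hno
    rw [Set.not_nonempty_iff_eq_empty] at hno
    obtain ⟨t, ht⟩ := isCompact_univ.elim_finite_subfamily_closed A hAclosed hno
    obtain ⟨P, hP, hPall⟩ := key (t.image (fun u => u.val)) (by
      intro x hx
      simp only [Finset.coe_image, Set.mem_image, Finset.mem_coe] at hx
      obtain ⟨u, _, rfl⟩ := hx
      exact u.2)
    have hmem : (⟨P, hP⟩ : ↥Pstar) ∈ Set.univ ∩ ⋂ u ∈ t, A u :=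
      ⟨trivial, Set.mem_iInter₂.2 fun u hu =>
        hPall u.val (Finset.mem_image_of_mem _ hu)⟩
    rw [ht] at hmem
    exact hmem
  obtain ⟨p, -, hp⟩ := hinter
  exact ⟨(p : ProbabilityMeasure Ω), p.2, fun u hu => Set.mem_iInter.1 hp ⟨u, hu⟩⟩
end
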